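/- arXiv:2004.04526 — 9 statements merged into one kernel-verified Lean document; each statement's English description precedes it below -/
import Mathlib

section
/- In a cartesian monoidal category C (a category with finite products), for all objects A, B, X, Y, the set of monoidal lenses ∫^M C(A, M × X) × C(M × Y, B) is in bijection with C(A, X) × C(A × Y, B). -/
open CategoryTheory CategoryTheory.Limits

universe u v

/-!
Every representative `(M, f, g)` is related, through `m = fst ∘ f : A ⟶ M`, to the representative
`(A, ⟨id, snd ∘ f⟩, g ∘ (m × id))` with residue `A`, and representatives with residue `A` of this
shape are exactly pairs `(A ⟶ X) × (A ⨯ Y ⟶ B)`. The map to pairs is invariant under the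
generating relation, so it descends to the quotient and is inverted by this normalisation.
-/

theorem prod_lift_id_snd_comp_map_fst {C : Type u} [Category.{v} C] {A M X : C}
    [HasBinaryProduct A X] [HasBinaryProduct M X] (f : A ⟶ M ⨯ X) :
    prod.lift (𝟙 A) (f ≫ prod.snd) ≫ prod.map (f ≫ prod.fst) (𝟙 X) = f := by
  rw [prod.lift_map, Category.id_comp, Category.comp_id]
  exact prod.hom_ext (prod.lift_fst _ _) (prod.lift_snd _ _)

noncomputable section

namespace MonoidalLens

variable {C : Type u} [Category.{v} C] [HasBinaryProducts C] {A B X Y : C}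

variable (A B X Y) in
abbrev Rep : Type (max u v) := Σ M : C, (A ⟶ M ⨯ X) × (M ⨯ Y ⟶ B)

def Rel (a b : Rep A B X Y) : Prop :=
  ∃ m : a.1 ⟶ b.1, b.2.1 = a.2.1 ≫ prod.map m (𝟙 X) ∧ a.2.2 = prod.map m (𝟙 Y) ≫ b.2.2

def toPair (a : Rep A B X Y) : (A ⟶ X) × (A ⨯ Y ⟶ B) :=
  (a.2.1 ≫ prod.snd, prod.map (a.2.1 ≫ prod.fst) (𝟙 Y) ≫ a.2.2)

def ofPair (p : (A ⟶ X) × (A ⨯ Y ⟶ B)) : Rep A B X Y :=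
  ⟨A, prod.lift (𝟙 A) p.1, p.2⟩

theorem toPair_eq_of_rel {a b : Rep A B X Y} (h : Rel a b) : toPair a = toPair b := by
  obtain ⟨M, f, g⟩ := a
  obtain ⟨N, f', g'⟩ := b
  obtain ⟨m, rfl, rfl⟩ : ∃ m : M ⟶ N, f' = f ≫ prod.map m (𝟙 X) ∧ g = prod.map m (𝟙 Y) ≫ g' := h
  simp [toPair]

theorem toPair_ofPair (p : (A ⟶ X) × (A ⨯ Y ⟶ B)) : toPair (ofPair p) = p :=
  Prod.ext (prod.lift_snd _ _) (by simp [toPair, ofPair, prod.lift_fst])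

theorem rel_ofPair_toPair : ∀ a : Rep A B X Y, Rel (ofPair (toPair a)) a
  | ⟨_, f, _⟩ => ⟨f ≫ prod.fst, (prod_lift_id_snd_comp_map_fst f).symm, rfl⟩

def equivPair : Quot (Rel (A := A) (B := B) (X := X) (Y := Y)) ≃ (A ⟶ X) × (A ⨯ Y ⟶ B) where
  toFun := Quot.lift toPair fun _ _ => toPair_eq_of_rel
  invFun p := Quot.mk _ (ofPair p)
  left_inv := Quot.ind fun a => Quot.sound (rel_ofPair_toPair a)
  right_inv := toPair_ofPair

end MonoidalLens

end

/-- In a cartesian category `C`, a monoidal lens `∫^M C(A, M × X) × C(M × Y, B)` is the same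
as a pair of morphisms `C(A, X) × C(A × Y, B)`; the bijection sends the class of `(M, f, g)`
to `(snd ∘ f, g ∘ ((fst ∘ f) × id_Y))`. -/
theorem cartesian_lens_bijection {C : Type u} [Category.{v} C] [HasFiniteProducts C]
    (A B X Y : C) :
    ∃ e : Quot (fun (a b : Σ M : C, (A ⟶ M ⨯ X) × (M ⨯ Y ⟶ B)) =>
          ∃ m : a.1 ⟶ b.1, b.2.1 = a.2.1 ≫ prod.map m (𝟙 X) ∧
            a.2.2 = prod.map m (𝟙 Y) ≫ b.2.2)
        ≃ ((A ⟶ X) × (A ⨯ Y ⟶ B)),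
      ∀ (M : C) (f : A ⟶ M ⨯ X) (g : M ⨯ Y ⟶ B),
        e (Quot.mk _ ⟨M, f, g⟩) =
          (f ≫ prod.snd, prod.map (f ≫ prod.fst) (𝟙 Y) ≫ g) :=
  ⟨MonoidalLens.equivPair, fun _ _ _ => rfl⟩
end

section
/- In a cocartesian monoidal category C (a category with finite coproducts), for all objects S, T, A, B, the set ∫^M C(S, M + A) × C(M + B, T) is in bijection with C(S, T + A) × C(B, T). (Prisms in a cocartesian category reduce to such a pair.) -/
/-!
Every prism `(f, g) : C(S, M + A) × C(M + B, T)` slides along `m := inl ≫ g : M ⟶ T` to the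
prism `(f ≫ (m + 1), [1, inr ≫ g])` over `T`, whose second leg is determined by
`inr ≫ g : B ⟶ T`. So each class has a canonical representative over `T`, read off from the
pair `(f ≫ (m + 1), inr ≫ g)`, and this pair is invariant under sliding.
-/

open CategoryTheory CategoryTheory.Limits

universe u v

namespace CategoryTheory.Limits

noncomputable section

variable {C : Type u} [Category.{v} C] [HasBinaryCoproducts C] {S T A B : C}

variable (S T A B) in
def PrismSlide (a b : Σ M : C, (S ⟶ M ⨿ A) × (M ⨿ B ⟶ T)) : Prop :=
  ∃ m : a.1 ⟶ b.1, b.2.1 = a.2.1 ≫ coprod.map m (𝟙 A) ∧ a.2.2 = coprod.map m (𝟙 B) ≫ b.2.2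

def prismCollapse (a : Σ M : C, (S ⟶ M ⨿ A) × (M ⨿ B ⟶ T)) : (S ⟶ T ⨿ A) × (B ⟶ T) :=
  (a.2.1 ≫ coprod.map (coprod.inl ≫ a.2.2) (𝟙 A), coprod.inr ≫ a.2.2)

def prismOfPair (p : (S ⟶ T ⨿ A) × (B ⟶ T)) : Σ M : C, (S ⟶ M ⨿ A) × (M ⨿ B ⟶ T) :=
  ⟨T, p.1, coprod.desc (𝟙 T) p.2⟩

theorem prismCollapse_eq_of_prismSlide {a b : Σ M : C, (S ⟶ M ⨿ A) × (M ⨿ B ⟶ T)}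
    (h : PrismSlide S T A B a b) : prismCollapse a = prismCollapse b := by
  obtain ⟨m, hf, hg⟩ := h
  simp [prismCollapse, hf, hg, coprod.map_map]

theorem prismCollapse_prismOfPair (p : (S ⟶ T ⨿ A) × (B ⟶ T)) :
    prismCollapse (prismOfPair p) = p := by
  dsimp only [prismCollapse, prismOfPair]
  simp only [coprod.inl_desc, coprod.inr_desc, coprod.map_id_id, Category.comp_id]

theorem prismSlide_prismOfPair_prismCollapse (a : Σ M : C, (S ⟶ M ⨿ A) × (M ⨿ B ⟶ T)) :
    PrismSlide S T A B a (prismOfPair (prismCollapse a)) := by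
  obtain ⟨M, f, g⟩ := a
  refine ⟨coprod.inl ≫ g, rfl, ?_⟩
  change g = coprod.map (coprod.inl ≫ g) (𝟙 B) ≫ coprod.desc (𝟙 T) (coprod.inr ≫ g)
  ext
  · simp only [coprod.inl_map_assoc, coprod.inl_desc, Category.comp_id]
  · simp only [coprod.inr_map_assoc, coprod.inr_desc, Category.id_comp]

variable (S T A B) in
def prismEquiv : Quot (PrismSlide S T A B) ≃ (S ⟶ T ⨿ A) × (B ⟶ T) where
  toFun := Quot.lift prismCollapse fun _ _ => prismCollapse_eq_of_prismSlide
  invFun p := Quot.mk _ (prismOfPair p)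
  left_inv := by
    rintro ⟨a⟩
    exact (Quot.sound (prismSlide_prismOfPair_prismCollapse a)).symm
  right_inv := prismCollapse_prismOfPair

end

end CategoryTheory.Limits

/-- In a cocartesian category `C`, a prism `∫^M C(S, M + A) × C(M + B, T)` is the same as a
pair of morphisms `C(S, T + A) × C(B, T)`. -/
theorem cocartesian_prism_bijection {C : Type u} [Category.{v} C] [HasFiniteCoproducts C]
    (S T A B : C) :
    Nonempty
      (Quot (fun (a b : Σ M : C, (S ⟶ M ⨿ A) × (M ⨿ B ⟶ T)) =>
          ∃ m : a.1 ⟶ b.1, b.2.1 = a.2.1 ≫ coprod.map m (𝟙 A) ∧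
            a.2.2 = coprod.map m (𝟙 B) ≫ b.2.2)
        ≃ ((S ⟶ T ⨿ A) × (B ⟶ T))) :=
  ⟨prismEquiv S T A B⟩
end

section
/- In a cartesian category C, consider lenses represented as pairs (v₁ : C(A, X), u₁ : C(A × Y, B)), (v₂ : C(X, U), u₂ : C(X × V, Y)), (v₃ : C(U, P), u₃ : C(U × Q, V)). The concrete composition of cartesian lenses, whose composite has view A → X → U and update A × V → B given by u₁ ∘ (id_A × u₂) ∘ (⟨id, id⟩ appropriately), is associative and unital, so cartesian lenses form a category whose objects are pairs of objects of C. -/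
open CategoryTheory CategoryTheory.Limits

universe u v

variable {C : Type u} [Category.{v} C] [HasFiniteProducts C]

/-- Composition of concrete cartesian lenses: the composite of `(v₁, u₁) : (A,B) → (X,Y)`
and `(v₂, u₂) : (X,Y) → (U,V)` has view `v₁ ≫ v₂` and update
`⟨π₁, (v₁ × id_V) ≫ u₂⟩ ≫ u₁`. -/
noncomputable def lensComp {A B X Y U V : C} (l₁ : (A ⟶ X) × (A ⨯ Y ⟶ B))
    (l₂ : (X ⟶ U) × (X ⨯ V ⟶ Y)) : (A ⟶ U) × (A ⨯ V ⟶ B) :=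
  (l₁.1 ≫ l₂.1, prod.lift prod.fst (prod.map l₁.1 (𝟙 V) ≫ l₂.2) ≫ l₁.2)

/-- The identity cartesian lens on `(A,B)`. -/
noncomputable def lensId (A B : C) : (A ⟶ A) × (A ⨯ B ⟶ B) := (𝟙 A, prod.snd)

/-- Cartesian lenses form a category (objects: pairs of objects of `C`): lens composition is
unital and associative. -/
theorem cartesian_lenses_category :
    (∀ (A B X Y : C) (l : (A ⟶ X) × (A ⨯ Y ⟶ B)), lensComp (lensId A B) l = l) ∧
    (∀ (A B X Y : C) (l : (A ⟶ X) × (A ⨯ Y ⟶ B)), lensComp l (lensId X Y) = l) ∧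
    (∀ (A B X Y U V S T : C) (l₁ : (A ⟶ X) × (A ⨯ Y ⟶ B))
      (l₂ : (X ⟶ U) × (X ⨯ V ⟶ Y)) (l₃ : (U ⟶ S) × (U ⨯ T ⟶ V)),
      lensComp (lensComp l₁ l₂) l₃ = lensComp l₁ (lensComp l₂ l₃)) := by
  refine ⟨?_, ?_, ?_⟩
  · intro A B X Y l
    apply Prod.ext <;> simp [lensComp, lensId]
    exact prod.lift_snd _ _
  · intro A B X Y l
    apply Prod.ext <;> simp [lensComp, lensId]
  · intro A B X Y U V S T l₁ l₂ l₃
    apply Prod.ext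
    · simp [lensComp]
    · dsimp [lensComp]
      rw [← Category.assoc]
      congr 1
      apply Limits.prod.hom_ext <;> simp
      all_goals (repeat erw [prod.lift_fst]); (repeat erw [prod.lift_snd])
      rw [← Category.assoc]
      congr 1
      apply Limits.prod.hom_ext <;> simp
end

section
/- In a cartesian category C, the set of elements of the two-legged shape ∫^{M,N} C(I₀, M × N) × C(I₁ × M, O₁) × C(N × I₂, O₂) is in bijection with C(I₀ × I₁, O₁) × C(I₀ × I₂, O₂). -/
open CategoryTheory CategoryTheory.Limits

universe u v

/-!
The coend relation slides `m : M ⟶ M'` and `n : N ⟶ N'` from `g` and `h` onto `f`, and composing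
the wiring `(f, g, h)` into a pair of morphisms `I₀ ⨯ I₁ ⟶ O₁`, `I₀ ⨯ I₂ ⟶ O₂` is invariant under
such slides. Conversely, sliding `m := f ≫ prod.fst` and `n := f ≫ prod.snd` moves every
representative to one with `M = N = I₀` and `f = diag I₀`, which is determined by its composite.
-/

namespace TwoLeggedShape

variable {C : Type u} [Category.{v} C] [HasBinaryProducts C] {I₀ I₁ I₂ O₁ O₂ M N : C}

noncomputable def compose (f : I₀ ⟶ M ⨯ N) (g : I₁ ⨯ M ⟶ O₁) (h : N ⨯ I₂ ⟶ O₂) :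
    (I₀ ⨯ I₁ ⟶ O₁) × (I₀ ⨯ I₂ ⟶ O₂) :=
  (prod.lift prod.snd (prod.fst ≫ f ≫ prod.fst) ≫ g,
   prod.lift (prod.fst ≫ f ≫ prod.snd) prod.snd ≫ h)

theorem compose_map_comp {M' N' : C} (f : I₀ ⟶ M ⨯ N) (m : M ⟶ M') (n : N ⟶ N')
    (g : I₁ ⨯ M' ⟶ O₁) (h : N' ⨯ I₂ ⟶ O₂) :
    compose f (prod.map (𝟙 I₁) m ≫ g) (prod.map n (𝟙 I₂) ≫ h) =
      compose (f ≫ prod.map m n) g h := by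
  simp [compose, prod.lift_map_assoc]

theorem compose_diag (p : (I₀ ⨯ I₁ ⟶ O₁) × (I₀ ⨯ I₂ ⟶ O₂)) :
    compose (diag I₀) ((prod.braiding I₀ I₁).inv ≫ p.1) p.2 = p := by
  simp [compose, prod.comp_lift_assoc, prod.lift_fst, prod.lift_snd]

theorem braiding_inv_comp_compose_fst (f : I₀ ⟶ M ⨯ N) (g : I₁ ⨯ M ⟶ O₁)
    (h : N ⨯ I₂ ⟶ O₂) :
    (prod.braiding I₀ I₁).inv ≫ (compose f g h).1 = prod.map (𝟙 I₁) (f ≫ prod.fst) ≫ g := by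
  simp [compose, prod.comp_lift_assoc, prod.lift_snd, prod.lift_fst_assoc,
    ← prod.lift_fst_comp_snd_comp]

theorem compose_snd (f : I₀ ⟶ M ⨯ N) (g : I₁ ⨯ M ⟶ O₁) (h : N ⨯ I₂ ⟶ O₂) :
    (compose f g h).2 = prod.map (f ≫ prod.snd) (𝟙 I₂) ≫ h := by
  simp [compose, ← prod.lift_fst_comp_snd_comp]

theorem diag_comp_map_fst_snd (f : I₀ ⟶ M ⨯ N) :
    diag I₀ ≫ prod.map (f ≫ prod.fst) (f ≫ prod.snd) = f := by
  simp [prod.lift_map, ← prod.comp_lift]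

end TwoLeggedShape

open TwoLeggedShape in
/-- In a cartesian category `C`, the two-legged shape
`∫^{M,N} C(I₀, M × N) × C(I₁ × M, O₁) × C(N × I₂, O₂)` is in bijection with
`C(I₀ × I₁, O₁) × C(I₀ × I₂, O₂)`; in particular `I₁` cannot affect `O₂` and `I₂` cannot
affect `O₁`. -/
theorem two_legged_shape_bijection {C : Type u} [Category.{v} C] [HasFiniteProducts C]
    (I₀ I₁ I₂ O₁ O₂ : C) :
    ∃ e : Quot (fun (a b : Σ MN : C × C,
            (I₀ ⟶ MN.1 ⨯ MN.2) × (I₁ ⨯ MN.1 ⟶ O₁) × (MN.2 ⨯ I₂ ⟶ O₂)) =>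
          ∃ (m : a.1.1 ⟶ b.1.1) (n : a.1.2 ⟶ b.1.2)
            (f : I₀ ⟶ a.1.1 ⨯ a.1.2) (g : I₁ ⨯ b.1.1 ⟶ O₁) (h : b.1.2 ⨯ I₂ ⟶ O₂),
            a.2 = (f, prod.map (𝟙 I₁) m ≫ g, prod.map n (𝟙 I₂) ≫ h) ∧
            b.2 = (f ≫ prod.map m n, g, h))
        ≃ ((I₀ ⨯ I₁ ⟶ O₁) × (I₀ ⨯ I₂ ⟶ O₂)),
      ∀ (M N : C) (f : I₀ ⟶ M ⨯ N) (g : I₁ ⨯ M ⟶ O₁) (h : N ⨯ I₂ ⟶ O₂),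
        e (Quot.mk _ ⟨(M, N), f, g, h⟩) =
          (prod.lift prod.snd (prod.fst ≫ f ≫ prod.fst) ≫ g,
           prod.lift (prod.fst ≫ f ≫ prod.snd) prod.snd ≫ h) := by
  refine ⟨⟨Quot.lift (fun a => compose a.2.1 a.2.2.1 a.2.2.2) ?_,
    fun p => Quot.mk _ ⟨(I₀, I₀), diag I₀, (prod.braiding I₀ I₁).inv ≫ p.1, p.2⟩,
    ?_, compose_diag⟩, fun _ _ _ _ _ => rfl⟩
  · rintro a b ⟨m, n, f, g, h, ha, hb⟩
    rw [ha, hb]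
    exact compose_map_comp f m n g h
  · rintro ⟨⟨⟨M, N⟩, f, g, h⟩⟩
    refine Quot.sound ⟨f ≫ prod.fst, f ≫ prod.snd, diag I₀, g, h, ?_, ?_⟩
    · exact congrArg _ (Prod.ext (braiding_inv_comp_compose_fst f g h) (compose_snd f g h))
    · exact Prod.ext (diag_comp_map_fst_snd f).symm rfl
end

section
/- For any profunctor P : Aᵒᵖ × B → Set there is a natural transformation (lax copying) ∫^X P(A,X) × B(X,Y₁) × B(X,Y₂) → P(A,Y₁) × P(A,Y₂), and when P(A,-) = B(G A, -) is representable for each A, this map is a bijection. -/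
open CategoryTheory Opposite

universe u

/-- Lax copying of a profunctor: for `P : Aᵒᵖ × B → Set` there is a canonical map
`∫^X P(A,X) × B(X,Y₁) × B(X,Y₂) → P(A,Y₁) × P(A,Y₂)`, sending the class of `(p, f₁, f₂)` to
`(P(A,f₁)(p), P(A,f₂)(p))`; and when `P(A,-)` is representable this map is a bijection. -/
theorem profunctor_lax_copy {A B : Type u} [SmallCategory A] [SmallCategory B]
    (P : Aᵒᵖ ⥤ B ⥤ Type u) (A₀ : A) (Y₁ Y₂ : B) :
    ∃ φ : Quot (fun (a b : Σ X : B, (P.obj (op A₀)).obj X × (X ⟶ Y₁) × (X ⟶ Y₂)) =>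
          ∃ g : a.1 ⟶ b.1, b.2.1 = (P.obj (op A₀)).map g a.2.1 ∧
            a.2.2.1 = g ≫ b.2.2.1 ∧ a.2.2.2 = g ≫ b.2.2.2) →
        ((P.obj (op A₀)).obj Y₁ × (P.obj (op A₀)).obj Y₂),
      (∀ (X : B) (p : (P.obj (op A₀)).obj X) (f₁ : X ⟶ Y₁) (f₂ : X ⟶ Y₂),
        φ (Quot.mk _ ⟨X, p, f₁, f₂⟩) =
          ((P.obj (op A₀)).map f₁ p, (P.obj (op A₀)).map f₂ p)) ∧
      -- when P(A₀,-) is representable, this map is a bijection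
      ((∃ (G : B) (e : ∀ X : B, (P.obj (op A₀)).obj X ≃ (G ⟶ X)),
          ∀ (X X' : B) (g : X ⟶ X') (p : (P.obj (op A₀)).obj X),
            e X' ((P.obj (op A₀)).map g p) = e X p ≫ g) →
        Function.Bijective φ) := by
  set F := P.obj (op A₀) with hF
  refine ⟨Quot.lift (fun a => (F.map a.2.2.1 a.2.1, F.map a.2.2.2 a.2.1)) ?_, ?_, ?_⟩
  · rintro ⟨X, p, f₁, f₂⟩ ⟨X', p', f₁', f₂'⟩ ⟨g, hp, h₁, h₂⟩
    dsimp only at hp h₁ h₂ ⊢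
    rw [hp, h₁, h₂]
    simp [FunctorToTypes.map_comp_apply]
  · intro X p f₁ f₂; rfl
  · rintro ⟨G, e, he⟩
    -- canonical representative
    set u : F.obj G := (e G).symm (𝟙 G) with hu
    have heu : e G u = 𝟙 G := (e G).apply_symm_apply _
    have canon : ∀ (X : B) (p : F.obj X) (f₁ : X ⟶ Y₁) (f₂ : X ⟶ Y₂),
        (Quot.mk _ ⟨G, u, e X p ≫ f₁, e X p ≫ f₂⟩ :
          Quot (fun (a b : Σ X : B, F.obj X × (X ⟶ Y₁) × (X ⟶ Y₂)) =>
          ∃ g : a.1 ⟶ b.1, b.2.1 = F.map g a.2.1 ∧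
            a.2.2.1 = g ≫ b.2.2.1 ∧ a.2.2.2 = g ≫ b.2.2.2)) =
          Quot.mk _ ⟨X, p, f₁, f₂⟩ := by
      intro X p f₁ f₂
      apply Quot.sound
      refine ⟨e X p, ?_, rfl, rfl⟩
      apply (e X).injective
      rw [he, heu, Category.id_comp]
    have key : ∀ (h₁ : G ⟶ Y₁), e Y₁ (F.map h₁ u) = h₁ := by
      intro h₁; rw [he, heu, Category.id_comp]
    have key₂ : ∀ (h₂ : G ⟶ Y₂), e Y₂ (F.map h₂ u) = h₂ := by
      intro h₂; rw [he, heu, Category.id_comp]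
    constructor
    · intro x y hxy
      obtain ⟨⟨X, p, f₁, f₂⟩, rfl⟩ := Quot.exists_rep x
      obtain ⟨⟨X', p', f₁', f₂'⟩, rfl⟩ := Quot.exists_rep y
      rw [← canon X p f₁ f₂, ← canon X' p' f₁' f₂'] at hxy ⊢
      simp only [Quot.lift_mk, Prod.mk.injEq] at hxy
      obtain ⟨hx1, hx2⟩ := hxy
      have e1 : e X p ≫ f₁ = e X' p' ≫ f₁' := by
        have := congrArg (e Y₁) hx1; rwa [key, key] at this
      have e2 : e X p ≫ f₂ = e X' p' ≫ f₂' := by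
        have := congrArg (e Y₂) hx2; rwa [key₂, key₂] at this
      rw [e1, e2]
    · rintro ⟨p₁, p₂⟩
      refine ⟨Quot.mk _ ⟨G, u, e Y₁ p₁, e Y₂ p₂⟩, ?_⟩
      simp only [Quot.lift_mk]
      have h1 : F.map (e Y₁ p₁) u = p₁ := by
        apply (e Y₁).injective; rw [key]
      have h2 : F.map (e Y₂ p₂) u = p₂ := by
        apply (e Y₂).injective; rw [key₂]
      rw [h1, h2]
end

section
/- In a cartesian category C, for objects P, A, B the set of 'monoidal learners' ∫^{P,Q} C(P × A, Q × B) × C(Q × B, P × A) is in bijection with Σ'-style data: the set ∫^P C(P × A, B) × C(P × A × B, A) × C(P × A × B, P), i.e. every class of a pair of morphisms f : P × A → Q × B, g : Q × B → P × A reduces (by copying via the product structure and Yoneda reduction on Q) to a parameters object P with an implementation C(P × A, B), a request C(P × A × B, A), and an update C(P × A × B, P), up to the sliding equivalence in P. -/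
/-!
Split `f : P ⨯ A ⟶ Q ⨯ B` into `f₁ : P ⨯ A ⟶ Q` and the implementation `f₂ : P ⨯ A ⟶ B`;
then `(f₁ × 𝟙 B) ≫ g : (P ⨯ A) ⨯ B ⟶ P ⨯ A` splits into the update and the request.
Conversely, `(i, r, s)` gives the learner with `Q = P ⨯ A`, `f = ⟨𝟙, i⟩` and `g = ⟨s, r⟩`.
The round trip on learners only slides `f₁` across the residual `Q` (co-Yoneda), the other round
trip is the identity, and both constructions respect the sliding relations.
-/

open CategoryTheory CategoryTheory.Limits

universe u v

namespace MonoidalLearner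

variable {C : Type u} [Category.{v} C] [HasBinaryProducts C]

/- Representatives `(P, Q, f, g)` of `∫^{P,Q} C(P × A, Q × B) × C(Q × B, P × A)`; the coend is
`Quot (Slide A B)`. -/
abbrev Rep (A B : C) : Type (max u v) :=
  Σ PQ : C × C, (PQ.1 ⨯ A ⟶ PQ.2 ⨯ B) × (PQ.2 ⨯ B ⟶ PQ.1 ⨯ A)

def Slide (A B : C) (a b : Rep A B) : Prop :=
  ∃ (m : a.1.1 ⟶ b.1.1) (n : a.1.2 ⟶ b.1.2)
    (f : b.1.1 ⨯ A ⟶ a.1.2 ⨯ B) (g : b.1.2 ⨯ B ⟶ a.1.1 ⨯ A),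
    a.2 = (prod.map m (𝟙 A) ≫ f, prod.map n (𝟙 B) ≫ g) ∧
    b.2 = (f ≫ prod.map n (𝟙 B), g ≫ prod.map m (𝟙 A))

variable {A B : C}

@[elab_as_elim]
theorem Slide.induction {motive : Rep A B → Rep A B → Prop}
    (slide : ∀ {P Q P' Q' : C} (m : P ⟶ P') (n : Q ⟶ Q') (f : P' ⨯ A ⟶ Q ⨯ B)
      (g : Q' ⨯ B ⟶ P ⨯ A),
      motive ⟨(P, Q), prod.map m (𝟙 A) ≫ f, prod.map n (𝟙 B) ≫ g⟩
        ⟨(P', Q'), f ≫ prod.map n (𝟙 B), g ≫ prod.map m (𝟙 A)⟩)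
    {a b : Rep A B} (h : Slide A B a b) : motive a b := by
  obtain ⟨⟨P, Q⟩, _⟩ := a
  obtain ⟨⟨P', Q'⟩, _⟩ := b
  obtain ⟨m, n, f, g, ha, hb⟩ := h
  -- `subst` is blocked: the instance arguments in `ha`, `hb` depend on the components themselves
  simp only at m n f g ha hb
  simp only [ha, hb]
  exact slide m n f g

theorem mk_slide_fst {P P' Q : C} (m : P ⟶ P') (f : P' ⨯ A ⟶ Q ⨯ B)
    (g : Q ⨯ B ⟶ P ⨯ A) :
    Quot.mk (Slide A B) ⟨(P, Q), prod.map m (𝟙 A) ≫ f, g⟩ =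
      Quot.mk (Slide A B) ⟨(P', Q), f, g ≫ prod.map m (𝟙 A)⟩ :=
  Quot.sound ⟨m, 𝟙 Q, f, g, by simp, by simp⟩

theorem mk_slide_snd {P Q Q' : C} (n : Q ⟶ Q') (f : P ⨯ A ⟶ Q ⨯ B)
    (g : Q' ⨯ B ⟶ P ⨯ A) :
    Quot.mk (Slide A B) ⟨(P, Q), f, prod.map n (𝟙 B) ≫ g⟩ =
      Quot.mk (Slide A B) ⟨(P, Q'), f ≫ prod.map n (𝟙 B), g⟩ :=
  Quot.sound ⟨𝟙 P, n, f, g, by simp, by simp⟩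

end MonoidalLearner

namespace Learner

variable {C : Type u} [Category.{v} C] [HasBinaryProducts C]

/- Representatives `(P, implementation, request, update)` of the coend over `P`. -/
abbrev Rep (A B : C) : Type (max u v) :=
  Σ P : C, (P ⨯ A ⟶ B) × ((P ⨯ A) ⨯ B ⟶ A) × ((P ⨯ A) ⨯ B ⟶ P)

def Slide (A B : C) (a b : Rep A B) : Prop :=
  ∃ (m : a.1 ⟶ b.1) (f : b.1 ⨯ A ⟶ B)
    (r : (b.1 ⨯ A) ⨯ B ⟶ A) (s : (b.1 ⨯ A) ⨯ B ⟶ a.1),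
    a.2 = (prod.map m (𝟙 A) ≫ f,
           prod.map (prod.map m (𝟙 A)) (𝟙 B) ≫ r,
           prod.map (prod.map m (𝟙 A)) (𝟙 B) ≫ s) ∧
    b.2 = (f, r, s ≫ m)

variable {A B : C}

@[elab_as_elim]
theorem Slide.induction {motive : Rep A B → Rep A B → Prop}
    (slide : ∀ {P P' : C} (m : P ⟶ P') (f : P' ⨯ A ⟶ B) (r : (P' ⨯ A) ⨯ B ⟶ A)
      (s : (P' ⨯ A) ⨯ B ⟶ P),
      motive ⟨P, prod.map m (𝟙 A) ≫ f, prod.map (prod.map m (𝟙 A)) (𝟙 B) ≫ r,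
          prod.map (prod.map m (𝟙 A)) (𝟙 B) ≫ s⟩
        ⟨P', f, r, s ≫ m⟩)
    {a b : Rep A B} (h : Slide A B a b) : motive a b := by
  obtain ⟨P, _⟩ := a
  obtain ⟨P', _⟩ := b
  obtain ⟨m, f, r, s, ha, hb⟩ := h
  simp only at m f r s ha hb
  simp only [ha, hb]
  exact slide m f r s

end Learner

noncomputable section

attribute [local simp] prod.lift_fst prod.lift_snd prod.lift_fst_assoc prod.lift_snd_assoc

variable {C : Type u} [Category.{v} C] [HasBinaryProducts C] {A B : C}

open MonoidalLearner Learner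

def MonoidalLearner.toLearner : MonoidalLearner.Rep A B → Learner.Rep A B
  | ⟨(P, _), f, g⟩ =>
    ⟨P, f ≫ prod.snd, prod.map (f ≫ prod.fst) (𝟙 B) ≫ g ≫ prod.snd,
      prod.map (f ≫ prod.fst) (𝟙 B) ≫ g ≫ prod.fst⟩

def Learner.toMonoidalLearner : Learner.Rep A B → MonoidalLearner.Rep A B
  | ⟨P, f, r, s⟩ => ⟨(P, P ⨯ A), prod.lift (𝟙 _) f, prod.lift s r⟩

/- Unfolding the two maps by `simp` leaves instance arguments whose types still mention the
unreduced application (e.g. `(toLearner _).1`), and simp lemmas then fail to match; `rw` with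
these equations rewrites those occurrences too. -/
theorem MonoidalLearner.toLearner_mk {P Q : C} (f : P ⨯ A ⟶ Q ⨯ B) (g : Q ⨯ B ⟶ P ⨯ A) :
    toLearner ⟨(P, Q), f, g⟩ =
      ⟨P, f ≫ prod.snd, prod.map (f ≫ prod.fst) (𝟙 B) ≫ g ≫ prod.snd,
        prod.map (f ≫ prod.fst) (𝟙 B) ≫ g ≫ prod.fst⟩ :=
  rfl

theorem Learner.toMonoidalLearner_mk {P : C} (f : P ⨯ A ⟶ B) (r : (P ⨯ A) ⨯ B ⟶ A)
    (s : (P ⨯ A) ⨯ B ⟶ P) :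
    toMonoidalLearner ⟨P, f, r, s⟩ = ⟨(P, P ⨯ A), prod.lift (𝟙 _) f, prod.lift s r⟩ :=
  rfl

theorem MonoidalLearner.toLearner_slide {P Q P' Q' : C} (m : P ⟶ P') (n : Q ⟶ Q')
    (f : P' ⨯ A ⟶ Q ⨯ B) (g : Q' ⨯ B ⟶ P ⨯ A) :
    Learner.Slide A B (toLearner ⟨(P, Q), prod.map m (𝟙 A) ≫ f, prod.map n (𝟙 B) ≫ g⟩)
      (toLearner ⟨(P', Q'), f ≫ prod.map n (𝟙 B), g ≫ prod.map m (𝟙 A)⟩) := by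
  let u := prod.map (f ≫ prod.fst ≫ n) (𝟙 B) ≫ g
  rw [toLearner_mk, toLearner_mk]
  refine ⟨m, f ≫ prod.snd, u ≫ prod.snd, u ≫ prod.fst, ?_, ?_⟩ <;>
  simp [u, prod.map_map_assoc]

theorem Learner.toLearner_toMonoidalLearner (t : Learner.Rep A B) :
    toLearner (toMonoidalLearner t) = t := by
  obtain ⟨P, f, r, s⟩ := t
  rw [toMonoidalLearner_mk, toLearner_mk]
  simp

theorem MonoidalLearner.mk_toMonoidalLearner_toLearner {P Q : C} (f : P ⨯ A ⟶ Q ⨯ B)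
    (g : Q ⨯ B ⟶ P ⨯ A) :
    Quot.mk (MonoidalLearner.Slide A B) (toMonoidalLearner (toLearner ⟨(P, Q), f, g⟩)) =
      Quot.mk _ ⟨(P, Q), f, g⟩ := by
  have h_pair : prod.lift (prod.map (f ≫ prod.fst) (𝟙 B) ≫ g ≫ prod.fst)
      (prod.map (f ≫ prod.fst) (𝟙 B) ≫ g ≫ prod.snd) = prod.map (f ≫ prod.fst) (𝟙 B) ≫ g := by
    ext <;> simp
  have h_split : prod.lift (𝟙 (P ⨯ A)) (f ≫ prod.snd) ≫ prod.map (f ≫ prod.fst) (𝟙 B) = f := by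
    ext <;> simp
  rw [toLearner_mk, toMonoidalLearner_mk, h_pair]
  -- co-Yoneda: slide the residual `P ⨯ A` along `f ≫ prod.fst : P ⨯ A ⟶ Q`
  rw [MonoidalLearner.mk_slide_snd, h_split]

theorem Learner.mk_toMonoidalLearner_slide {P P' : C} (m : P ⟶ P') (f : P' ⨯ A ⟶ B)
    (r : (P' ⨯ A) ⨯ B ⟶ A) (s : (P' ⨯ A) ⨯ B ⟶ P) :
    Quot.mk (MonoidalLearner.Slide A B) (toMonoidalLearner ⟨P, prod.map m (𝟙 A) ≫ f,
        prod.map (prod.map m (𝟙 A)) (𝟙 B) ≫ r, prod.map (prod.map m (𝟙 A)) (𝟙 B) ≫ s⟩) =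
      Quot.mk _ (toMonoidalLearner ⟨P', f, r, s ≫ m⟩) := by
  have h_pair : prod.lift (prod.map (prod.map m (𝟙 A)) (𝟙 B) ≫ s)
      (prod.map (prod.map m (𝟙 A)) (𝟙 B) ≫ r) =
        prod.map (prod.map m (𝟙 A)) (𝟙 B) ≫ prod.lift s r := by
    ext <;> simp
  have h_impl : prod.lift (𝟙 (P ⨯ A)) (prod.map m (𝟙 A) ≫ f) ≫
      prod.map (prod.map m (𝟙 A)) (𝟙 B) = prod.map m (𝟙 A) ≫ prod.lift (𝟙 (P' ⨯ A)) f := by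
    ext <;> simp
  have h_update : prod.lift s r ≫ prod.map m (𝟙 A) = prod.lift (s ≫ m) r := by
    ext <;> simp
  rw [toMonoidalLearner_mk, toMonoidalLearner_mk, h_pair, MonoidalLearner.mk_slide_snd, h_impl,
    MonoidalLearner.mk_slide_fst, h_update]

def monoidalLearnerEquivLearner (A B : C) :
    Quot (MonoidalLearner.Slide A B) ≃ Quot (Learner.Slide A B) where
  toFun := Quot.map toLearner fun _ _ => MonoidalLearner.Slide.induction toLearner_slide
  invFun := Quot.lift (fun t => Quot.mk _ (toMonoidalLearner t)) fun _ _ =>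
    Learner.Slide.induction mk_toMonoidalLearner_slide
  left_inv := Quot.ind fun ⟨(_, _), f, g⟩ => mk_toMonoidalLearner_toLearner f g
  right_inv := Quot.ind fun t => congrArg _ (toLearner_toMonoidalLearner t)

end

/-- In a cartesian category `C`, the set of monoidal learners
`∫^{P,Q} C(P × A, Q × B) × C(Q × B, P × A)` is in bijection with the set
`∫^P C(P × A, B) × C(P × A × B, A) × C(P × A × B, P)` of (classes of) parameters together
with an implementation, a request and an update morphism. -/
theorem learner_bijection {C : Type u} [Category.{v} C] [HasFiniteProducts C] (A B : C) :
    Nonempty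
      (Quot (fun (a b : Σ PQ : C × C,
            (PQ.1 ⨯ A ⟶ PQ.2 ⨯ B) × (PQ.2 ⨯ B ⟶ PQ.1 ⨯ A)) =>
          ∃ (m : a.1.1 ⟶ b.1.1) (n : a.1.2 ⟶ b.1.2)
            (f : b.1.1 ⨯ A ⟶ a.1.2 ⨯ B) (g : b.1.2 ⨯ B ⟶ a.1.1 ⨯ A),
            a.2 = (prod.map m (𝟙 A) ≫ f, prod.map n (𝟙 B) ≫ g) ∧
            b.2 = (f ≫ prod.map n (𝟙 B), g ≫ prod.map m (𝟙 A)))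
        ≃
       Quot (fun (a b : Σ P : C,
            (P ⨯ A ⟶ B) × ((P ⨯ A) ⨯ B ⟶ A) × ((P ⨯ A) ⨯ B ⟶ P)) =>
          ∃ (m : a.1 ⟶ b.1) (f : b.1 ⨯ A ⟶ B)
            (r : (b.1 ⨯ A) ⨯ B ⟶ A) (s : (b.1 ⨯ A) ⨯ B ⟶ a.1),
            a.2 = (prod.map m (𝟙 A) ≫ f,
                   prod.map (prod.map m (𝟙 A)) (𝟙 B) ≫ r,
                   prod.map (prod.map m (𝟙 A)) (𝟙 B) ≫ s) ∧
            b.2 = (f, r, s ≫ m))) :=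
  ⟨monoidalLearnerEquivLearner A B⟩
end

section
/- In a monoidal category C, the set of optics from (A,B) to (X,Y) defined with residual on the left, ∫^M C(A, M ⊗ X) × C(M ⊗ Y, B), carries a well-defined composition: given classes ⟨f₁,g₁⟩ : (A,B) → (X,Y) and ⟨f₂,g₂⟩ : (X,Y) → (U,V), the assignment ⟨(id_M ⊗ f₂) ∘ f₁ modulo associator, g₁ ∘ (id_M ⊗ g₂) modulo associator⟩ with residual M ⊗ N is well defined on equivalence classes, associative, and unital with identity ⟨λ⁻¹, λ⟩ (unitor), making optics into a category whose objects are pairs of objects of C. -/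
open CategoryTheory MonoidalCategory

universe u v

variable {C : Type u} [Category.{v} C] [MonoidalCategory C]

/-- The sliding relation defining the coend `∫^M C(A, M ⊗ X) × C(M ⊗ Y, B)`. -/
def OpticRel (A B X Y : C) (a b : Σ M : C, (A ⟶ M ⊗ X) × (M ⊗ Y ⟶ B)) : Prop :=
  ∃ m : a.1 ⟶ b.1, b.2.1 = a.2.1 ≫ (m ▷ X) ∧ a.2.2 = (m ▷ Y) ≫ b.2.2

/-- An optic `(A,B) → (X,Y)` in a monoidal category. -/
def Optic (A B X Y : C) : Type _ := Quot (OpticRel A B X Y)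


def ocompRaw {A B X Y U V : C} (a : Σ M : C, (A ⟶ M ⊗ X) × (M ⊗ Y ⟶ B))
    (b : Σ N : C, (X ⟶ N ⊗ U) × (N ⊗ V ⟶ Y)) : Optic A B U V :=
  Quot.mk _ ⟨a.1 ⊗ b.1, a.2.1 ≫ (a.1 ◁ b.2.1) ≫ (α_ a.1 b.1 U).inv,
    (α_ a.1 b.1 V).hom ≫ (a.1 ◁ b.2.2) ≫ a.2.2⟩

lemma ocompRaw_right {A B X Y U V : C} (a : Σ M : C, (A ⟶ M ⊗ X) × (M ⊗ Y ⟶ B))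
    (b b' : Σ N : C, (X ⟶ N ⊗ U) × (N ⊗ V ⟶ Y)) (h : OpticRel X Y U V b b') :
    ocompRaw a b = ocompRaw a b' := by
  obtain ⟨m, h1, h2⟩ := h
  apply Quot.sound
  refine ⟨a.1 ◁ m, ?_, ?_⟩
  · simp [h1, whisker_exchange]
  · simp [h2, whisker_exchange]

lemma ocompRaw_left {A B X Y U V : C} (a a' : Σ M : C, (A ⟶ M ⊗ X) × (M ⊗ Y ⟶ B))
    (b : Σ N : C, (X ⟶ N ⊗ U) × (N ⊗ V ⟶ Y)) (h : OpticRel A B X Y a a') :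
    ocompRaw a b = ocompRaw a' b := by
  obtain ⟨m, h1, h2⟩ := h
  apply Quot.sound
  refine ⟨m ▷ b.1, ?_, ?_⟩
  · rw [h1]
    simp only [Category.assoc, ← whisker_exchange_assoc, ← associator_inv_naturality_left]
  · rw [h2]
    simp only [Category.assoc, associator_inv_naturality_left_assoc]
    rw [← Category.assoc (a.fst ◁ b.snd.2), whisker_exchange]
    simp

def ocomp {A B X Y U V : C} : Optic A B X Y → Optic X Y U V → Optic A B U V :=
  Quot.lift (fun a => Quot.lift (ocompRaw a) (ocompRaw_right a))
    (fun a a' h => funext (Quot.ind fun b => ocompRaw_left a a' b h))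

def oid (A B : C) : Optic A B A B := Quot.mk _ ⟨𝟙_ C, (λ_ A).inv, (λ_ B).hom⟩

lemma ocomp_id_left {A B X Y : C} (o : Optic A B X Y) : ocomp (oid A B) o = o := by
  induction o using Quot.ind with
  | _ a =>
    apply Quot.sound
    refine ⟨(λ_ a.1).hom, ?_, ?_⟩
    · simp
    · simp

lemma ocomp_id_right {A B X Y : C} (o : Optic A B X Y) : ocomp o (oid X Y) = o := by
  induction o using Quot.ind with
  | _ a =>
    apply Quot.sound
    refine ⟨(ρ_ a.1).hom, ?_, ?_⟩
    · simp
    · simp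

lemma ocomp_assoc {A B X Y U V S T : C} (o₁ : Optic A B X Y) (o₂ : Optic X Y U V)
    (o₃ : Optic U V S T) : ocomp (ocomp o₁ o₂) o₃ = ocomp o₁ (ocomp o₂ o₃) := by
  induction o₁ using Quot.ind with
  | _ a =>
  induction o₂ using Quot.ind with
  | _ b =>
  induction o₃ using Quot.ind with
  | _ c =>
    apply Quot.sound
    refine ⟨(α_ a.1 b.1 c.1).hom, ?_, ?_⟩
    · simp [whisker_exchange]
    · simp [whisker_exchange]

/-- Optics in a monoidal category form a category: the composition with residual `M ⊗ N` is
well defined on equivalence classes, associative, and unital with identity `⟨λ⁻¹, λ⟩`. -/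
theorem optics_category :
    ∃ (comp : ∀ {A B X Y U V : C}, Optic A B X Y → Optic X Y U V → Optic A B U V)
      (idO : ∀ A B : C, Optic A B A B),
      -- the composition formula on representatives
      (∀ (A B X Y U V M N : C) (f₁ : A ⟶ M ⊗ X) (g₁ : M ⊗ Y ⟶ B)
        (f₂ : X ⟶ N ⊗ U) (g₂ : N ⊗ V ⟶ Y),
        comp (Quot.mk (OpticRel A B X Y) ⟨M, f₁, g₁⟩)
             (Quot.mk (OpticRel X Y U V) ⟨N, f₂, g₂⟩) =
          Quot.mk (OpticRel A B U V)
            ⟨M ⊗ N, f₁ ≫ (M ◁ f₂) ≫ (α_ M N U).inv,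
                    (α_ M N V).hom ≫ (M ◁ g₂) ≫ g₁⟩) ∧
      -- the identity optic
      (∀ A B : C, idO A B = Quot.mk (OpticRel A B A B) ⟨𝟙_ C, (λ_ A).inv, (λ_ B).hom⟩) ∧
      -- unitality
      (∀ (A B X Y : C) (o : Optic A B X Y), comp (idO A B) o = o) ∧
      (∀ (A B X Y : C) (o : Optic A B X Y), comp o (idO X Y) = o) ∧
      -- associativity
      (∀ (A B X Y U V S T : C) (o₁ : Optic A B X Y) (o₂ : Optic X Y U V)
        (o₃ : Optic U V S T), comp (comp o₁ o₂) o₃ = comp o₁ (comp o₂ o₃)) := by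
  refine ⟨@ocomp C _ _, oid, ?_, ?_, ?_, ?_, ?_⟩
  · intro A B X Y U V M N f₁ g₁ f₂ g₂; rfl
  · intro A B; rfl
  · intro A B X Y o; exact ocomp_id_left o
  · intro A B X Y o; exact ocomp_id_right o
  · intro A B X Y U V S T o₁ o₂ o₃; exact ocomp_assoc o₁ o₂ o₃
end

section
/- In a monoidal category C, the assignment sending a lens of type (A,A) → (X,Y), i.e. an element of ∫^M C(A, M ⊗ X) × C(M ⊗ Y, A) represented by a pair (f, g) with f : A → M ⊗ X and g : M ⊗ Y → A, to the class [M, f ∘ g] in the set of stateful morphisms ∫^S C(S ⊗ Y, S ⊗ X), where f ∘ g : M ⊗ Y → M ⊗ X is g followed by f, is well defined on coend equivalence classes. -/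
open CategoryTheory MonoidalCategory

universe u v

/-- From lenses to dynamical systems: there is a well-defined map from lenses
`(A,A) → (X,Y)`, i.e. classes in `∫^M C(A, M ⊗ X) × C(M ⊗ Y, A)`, to stateful morphisms
`∫^S C(S ⊗ Y, S ⊗ X)` (states of a category with feedback), sending the class of `(f, g)`
to the class with state `M` of the composite `g ≫ f : M ⊗ Y ⟶ M ⊗ X`.  Existence of the
map on the quotients expresses that it respects both sliding equivalence relations. -/
theorem lens_to_feedback {C : Type u} [Category.{v} C] [MonoidalCategory C] (A X Y : C) :
    ∃ Φ : Quot (fun (a b : Σ M : C, (A ⟶ M ⊗ X) × (M ⊗ Y ⟶ A)) =>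
          ∃ m : a.1 ⟶ b.1, b.2.1 = a.2.1 ≫ (m ▷ X) ∧ a.2.2 = (m ▷ Y) ≫ b.2.2) →
        Quot (fun (s s' : Σ S : C, (S ⊗ Y ⟶ S ⊗ X)) =>
          ∃ (m : s.1 ⟶ s'.1) (t : s'.1 ⊗ Y ⟶ s.1 ⊗ X),
            s.2 = (m ▷ Y) ≫ t ∧ s'.2 = t ≫ (m ▷ X)),
      ∀ (M : C) (f : A ⟶ M ⊗ X) (g : M ⊗ Y ⟶ A),
        Φ (Quot.mk _ ⟨M, f, g⟩) = Quot.mk _ ⟨M, g ≫ f⟩ := by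
  refine ⟨Quot.lift (fun a => Quot.mk _ ⟨a.1, a.2.2 ≫ a.2.1⟩) ?_, fun M f g => rfl⟩
  rintro ⟨M, f, g⟩ ⟨M', f', g'⟩ ⟨m, hf, hg⟩
  exact Quot.sound ⟨m, g' ≫ f, ⟨by rw [hg, Category.assoc], by rw [hf]; simp⟩⟩
end

section
/- For small categories A, B and a functor F : A ⥤ B, the zig-zag identity holds: the composite natural transformation B(F-,-) → B(F-,-) ⋄ B(-,F-) ⋄ B(F-,-) → B(F-,-) obtained from η followed by ε (whiskered appropriately) is the identity natural transformation. -/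
open CategoryTheory

universe u

/-- The zig-zag identity for the profunctor adjunction `B(F-,-) ⊣ B(-,F-)` induced by a functor
`F : A ⥤ B`: with `η f` the class of `(𝟙, F f)` in `∫^b B(F a, b) × B(b, F a')` and `ε` induced
by composition, the composite `B(F-,-) → B(F-,-) ⋄ B(-,F-) ⋄ B(F-,-) → B(F-,-)` (computed on any
representative of the unit's class, via the unitor/associator isomorphisms) is the identity. -/
theorem profunctor_zigzag {A B : Type u} [SmallCategory A] [SmallCategory B] (F : A ⥤ B) :
    ∃ (η : ∀ a a' : A, (a ⟶ a') →
        Quot (fun (x y : Σ b : B, (F.obj a ⟶ b) × (b ⟶ F.obj a')) =>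
          ∃ g : x.1 ⟶ y.1, y.2.1 = x.2.1 ≫ g ∧ x.2.2 = g ≫ y.2.2))
      (ε : ∀ b b' : B,
        Quot (fun (x y : Σ a : A, (b ⟶ F.obj a) × (F.obj a ⟶ b')) =>
          ∃ h : x.1 ⟶ y.1, y.2.1 = x.2.1 ≫ F.map h ∧ x.2.2 = F.map h ≫ y.2.2) → (b ⟶ b')),
      (∀ (a a' : A) (f : a ⟶ a'), η a a' f = Quot.mk _ ⟨F.obj a, 𝟙 (F.obj a), F.map f⟩) ∧
      (∀ (b b' : B) (a : A) (u : b ⟶ F.obj a) (v : F.obj a ⟶ b'),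
        ε b b' (Quot.mk _ ⟨a, u, v⟩) = u ≫ v) ∧
      -- the zig-zag composite is the identity on B(F-,-)
      (∀ (a : A) (X : B) (u : F.obj a ⟶ X) (v : X ⟶ F.obj a),
        Quot.mk _ ⟨X, u, v⟩ = η a a (𝟙 a) →
        ∀ (b : B) (g : F.obj a ⟶ b), u ≫ ε X b (Quot.mk _ ⟨a, v, g⟩) = g) := by
  refine ⟨fun a a' f => Quot.mk _ ⟨F.obj a, 𝟙 (F.obj a), F.map f⟩,
    fun b b' => Quot.lift (fun x => x.2.1 ≫ x.2.2)
      (by rintro ⟨a, u, v⟩ ⟨a', u', v'⟩ ⟨h, e1, e2⟩; simp [e1, e2] at *; simp [e1, e2]),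
    fun a a' f => rfl, fun b b' a u v => rfl, ?_⟩
  intro a X u v hq b g
  have : u ≫ v = 𝟙 (F.obj a) := by
    have := congrArg (Quot.lift (fun (x : Σ b : B, (F.obj a ⟶ b) × (b ⟶ F.obj a)) => x.2.1 ≫ x.2.2)
      (by rintro ⟨c, p, q⟩ ⟨c', p', q'⟩ ⟨h, e1, e2⟩; simp [e1, e2] at *; simp [e1, e2])) hq
    simpa using this
  simp [← Category.assoc, this]
end
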